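/- Let n ≥ 1, ℓ ≥ 0, d be integers and x = (d+ℓ)/(n+1) ∈ ℤ. There exists a surjective map of sheaves O_{ℙ¹}^{⊕n} ⊕ O_{ℙ¹}(ℓ) → O_{ℙ¹}(x) if and only if: (x ≥ 0 when n ≥ 2), and (x = 0 or x ≥ ℓ when n = 1). Equivalently in terms of d: d ≥ −ℓ when n ≥ 2, and d = −ℓ or d ≥ nℓ when n = 1. -/

import Mathlib

open MvPolynomial

/-
Evaluating at `(1 : 0)` forces `x ≥ 0`, and for `n ≥ 2` the forms `X₀ˣ, X₁ˣ, …` have no common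
zero. For `n = 1` and `0 < x < ℓ` the form of degree `x - ℓ` is `0`, while the remaining form of
positive degree has a zero on `ℙ¹` because the field is algebraically closed; for `x = 0` or
`x ≥ ℓ` the pairs `(1, 0)` and `(X₀ˣ, X₁ˣ⁻ˡ)` work.
-/

lemma MvPolynomial.eval_eq_eval_aeval_X_one {R : Type*} [CommRing R]
    (q : MvPolynomial (Fin 2) R) (t : R) :
    eval ![t, 1] q = (aeval ![Polynomial.X, 1] q).eval t := by
  rw [← Polynomial.coe_aeval_eq_eval, comp_aeval_apply, ← coe_aeval_eq_eval]
  simp only [coe_aeval_eq_eval, Polynomial.coe_aeval_eq_eval]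
  congr
  funext i
  fin_cases i <;> simp

/-- If the dehomogenization `q(t, 1)` is a constant `c`, then `q = c X₁ᵏ` vanishes at `(1, 0)`;
otherwise it has a root. -/
theorem MvPolynomial.IsHomogeneous.exists_eval_eq_zero {K : Type*} [Field K] [IsAlgClosed K]
    {q : MvPolynomial (Fin 2) K} {k : ℕ} (hq : q.IsHomogeneous k) (hk : 0 < k) :
    ∃ u v : K, (u ≠ 0 ∨ v ≠ 0) ∧ eval ![u, v] q = 0 := by
  set p : Polynomial K := MvPolynomial.aeval ![Polynomial.X, 1] q
  by_cases hp : p.degree ≤ 0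
  · have hqp : q = p.homogenize k := (Polynomial.homogenize_eq_of_isHomogeneous hq rfl).symm
    refine ⟨1, 0, Or.inl one_ne_zero, ?_⟩
    rw [hqp, Polynomial.eq_C_of_degree_le_zero hp, Polynomial.homogenize_C]
    simp [hk.ne']
  · obtain ⟨t, ht⟩ := IsAlgClosed.exists_root p fun h => hp h.le
    exact ⟨t, 1, Or.inr one_ne_zero, by rwa [eval_eq_eval_aeval_X_one]⟩

/-- A surjection `O^n ⊕ O(ℓ) → O(x)` of sheaves on `ℙ¹_K`: forms `f i` of degree `x` and `g` of
degree `x - ℓ` (a form of negative degree being `0`) without common zero. -/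
def HasSurjectionToTwist (K : Type*) [Field K] (n : ℕ) (ℓ x : ℤ) : Prop :=
  ∃ (f : Fin n → MvPolynomial (Fin 2) K) (g : MvPolynomial (Fin 2) K),
    (∀ i, (f i).IsHomogeneous x.toNat) ∧ (x < 0 → ∀ i, f i = 0) ∧
    g.IsHomogeneous (x - ℓ).toNat ∧ (x - ℓ < 0 → g = 0) ∧
    (∀ u v : K, (u ≠ 0 ∨ v ≠ 0) → (∃ i, eval ![u, v] (f i) ≠ 0) ∨ eval ![u, v] g ≠ 0)

namespace HasSurjectionToTwist

variable {K : Type*} [Field K] {n : ℕ} {ℓ x : ℤ}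

lemma nonneg (hl : 0 ≤ ℓ) (h : HasSurjectionToTwist K n ℓ x) : 0 ≤ x := by
  obtain ⟨f, g, -, hf, -, hg, hsurj⟩ := h
  by_contra! hx
  rcases hsurj 1 0 (Or.inl one_ne_zero) with ⟨i, hi⟩ | hg'
  · exact hi (by rw [hf hx i, map_zero])
  · exact hg' (by rw [hg (by omega), map_zero])

lemma eq_zero_or_le [IsAlgClosed K] (hl : 0 ≤ ℓ) (h : HasSurjectionToTwist K 1 ℓ x) :
    x = 0 ∨ ℓ ≤ x := by
  have hx := h.nonneg hl
  obtain ⟨f, g, hf, -, -, hg, hsurj⟩ := h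
  by_contra! hxl
  obtain ⟨u, v, huv, hfuv⟩ := (hf 0).exists_eval_eq_zero (by omega)
  rcases hsurj u v huv with ⟨i, hi⟩ | hg'
  · exact hi (by rwa [Subsingleton.elim i 0])
  · exact hg' (by rw [hg (by omega), map_zero])

lemma of_eq_zero (hn : 1 ≤ n) (hx : x = 0) : HasSurjectionToTwist K n ℓ x := by
  subst hx
  refine ⟨fun _ => 1, 0, fun _ => isHomogeneous_one _ _, by omega, isHomogeneous_zero _ _ _,
    fun _ => rfl, fun u v _ => Or.inl ⟨⟨0, hn⟩, by simp⟩⟩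

lemma of_two_le (hn : 2 ≤ n) (hx : 0 ≤ x) : HasSurjectionToTwist K n ℓ x := by
  refine ⟨fun i => if (i : ℕ) = 0 then X 0 ^ x.toNat else X 1 ^ x.toNat, 0, fun i => ?_,
    by omega, isHomogeneous_zero _ _ _, fun _ => rfl, fun u v huv => Or.inl ?_⟩
  · dsimp only
    split_ifs <;> exact isHomogeneous_X_pow _ _
  · rcases huv with hu | hv
    · exact ⟨⟨0, by omega⟩, by simp [hu]⟩
    · exact ⟨⟨1, hn⟩, by simp [hv]⟩

lemma of_le (hn : 1 ≤ n) (hl : 0 ≤ ℓ) (hx : ℓ ≤ x) : HasSurjectionToTwist K n ℓ x := by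
  refine ⟨fun _ => X 0 ^ x.toNat, X 1 ^ (x - ℓ).toNat, fun _ => isHomogeneous_X_pow _ _,
    by omega, isHomogeneous_X_pow _ _, by omega, fun u v huv => ?_⟩
  rcases huv with hu | hv
  · exact Or.inl ⟨⟨0, hn⟩, by simp [hu]⟩
  · exact Or.inr (by simp [hv])

end HasSurjectionToTwist

theorem hasSurjectionToTwist_iff {K : Type*} [Field K] [IsAlgClosed K] {n : ℕ} {ℓ x : ℤ}
    (hn : 1 ≤ n) (hl : 0 ≤ ℓ) :
    HasSurjectionToTwist K n ℓ x ↔ (2 ≤ n → 0 ≤ x) ∧ (n = 1 → x = 0 ∨ ℓ ≤ x) := by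
  refine ⟨fun h => ⟨fun _ => h.nonneg hl, fun hn1 => (hn1 ▸ h).eq_zero_or_le hl⟩, ?_⟩
  rintro ⟨hx2, hx1⟩
  obtain rfl | hn2 : n = 1 ∨ 2 ≤ n := by omega
  · rcases hx1 rfl with hx | hx
    exacts [.of_eq_zero hn hx, .of_le hn hl hx]
  · exact .of_two_le hn2 (hx2 hn2)

lemma twist_conditions_iff {n : ℕ} {ℓ d x : ℤ} (hx : d + ℓ = (n + 1) * x) :
    ((2 ≤ n → 0 ≤ x) ∧ (n = 1 → x = 0 ∨ ℓ ≤ x)) ↔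
      ((2 ≤ n → -ℓ ≤ d) ∧ (n = 1 → d = -ℓ ∨ (n : ℤ) * ℓ ≤ d)) := by
  have hnonneg : 0 ≤ x ↔ -ℓ ≤ d := by
    rw [neg_le_iff_add_nonneg, hx, mul_nonneg_iff_of_pos_left (by positivity)]
  refine and_congr (forall_congr' fun _ => hnonneg) (forall_congr' fun hn1 => ?_)
  subst hn1
  push_cast at hx ⊢
  omega

theorem stmt6 (n : ℕ) (hn : 1 ≤ n) (ℓ d x : ℤ) (hl : 0 ≤ ℓ)
    (hx : d + ℓ = (n + 1) * x) :
    ((∃ (f : Fin n → MvPolynomial (Fin 2) ℂ) (g : MvPolynomial (Fin 2) ℂ),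
        (∀ i, (f i).IsHomogeneous x.toNat) ∧ (x < 0 → ∀ i, f i = 0) ∧
        g.IsHomogeneous (x - ℓ).toNat ∧ (x - ℓ < 0 → g = 0) ∧
        (∀ u v : ℂ, (u ≠ 0 ∨ v ≠ 0) →
          (∃ i, eval ![u, v] (f i) ≠ 0) ∨ eval ![u, v] g ≠ 0)) ↔
      ((2 ≤ n → 0 ≤ x) ∧ (n = 1 → x = 0 ∨ ℓ ≤ x))) ∧
    (((2 ≤ n → 0 ≤ x) ∧ (n = 1 → x = 0 ∨ ℓ ≤ x)) ↔
      ((2 ≤ n → -ℓ ≤ d) ∧ (n = 1 → d = -ℓ ∨ (n : ℤ) * ℓ ≤ d))) :=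
  ⟨hasSurjectionToTwist_iff hn hl, twist_conditions_iff hx⟩
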